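/- arXiv:1607.07492 — 3 statements merged into one kernel-verified Lean document; each statement's English description precedes it below -/
import Mathlib

section
/- Let U ⊆ ℝ² be open, f : U → ℝ³ a C² immersion with Gauss map G, and F = P ∘ f; let J : U → ℝ be J(q) = det(DF(q)). Suppose p ∈ U satisfies ⟨G(p), e₃⟩ = 0 (p is a singular point of F) and ∂₁G(p) × ∂₂G(p) ≠ 0 (the Gaussian curvature does not vanish at p). Then DJ(p) ≠ 0. Consequently, if the Gaussian curvature is nonzero at every singular point of F, then F is a good map. -/
/-!
Write `c = ∂₁f × ∂₂f`, so that `G = c / ‖c‖` and, since `P` forgets the third coordinate,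
`J = c₃`. At a singular point `c₃(p) = 0`; if moreover `DJ(p) = Dc₃(p) = 0`, then
`DG₃(p) = D(‖c‖⁻¹) c₃(p) + ‖c‖⁻¹ Dc₃(p) = 0`. Differentiating `‖G‖ = 1` gives `∂ᵢG(p) ⊥ G(p)`.
So `∂₁G(p)` and `∂₂G(p)` are both orthogonal to `e₃` and to the horizontal nonzero vector `G(p)`,
hence parallel, and `∂₁G(p) × ∂₂G(p) = 0`.
-/

open scoped RealInnerProductSpace
noncomputable section

/-- The plane `ℝ²` with the Euclidean norm. -/
abbrev E2 := EuclideanSpace ℝ (Fin 2)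
/-- The space `ℝ³` with the Euclidean norm. -/
abbrev E3 := EuclideanSpace ℝ (Fin 3)

/-- The cross product on `ℝ³`. -/
def cross3 (a b : E3) : E3 :=
  WithLp.toLp 2 ![a 1 * b 2 - a 2 * b 1, a 2 * b 0 - a 0 * b 2, a 0 * b 1 - a 1 * b 0]

/-- The orthogonal projection `P(x₁,x₂,x₃) = (x₁,x₂)`. -/
def proj (x : E3) : E2 := WithLp.toLp 2 ![x 0, x 1]

/-- The vertical unit vector `e₃ = (0,0,1)`. -/
def e₃ : E3 := WithLp.toLp 2 ![0, 0, 1]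

/-- The first coordinate direction of `ℝ²`. -/
def b₁ : E2 := WithLp.toLp 2 ![1, 0]
/-- The second coordinate direction of `ℝ²`. -/
def b₂ : E2 := WithLp.toLp 2 ![0, 1]

/-- The Gauss map of an immersion `f : U → ℝ³`. -/
def gaussMap (f : E2 → E3) (p : E2) : E3 :=
  ‖cross3 (fderiv ℝ f p b₁) (fderiv ℝ f p b₂)‖⁻¹ •
    cross3 (fderiv ℝ f p b₁) (fderiv ℝ f p b₂)

open Topology

lemma cross3_eq_crossProduct (a b : E3) :
    cross3 a b = WithLp.toLp 2 (crossProduct a.ofLp b.ofLp) := by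
  ext i; fin_cases i <;> simp [cross3, cross_apply]

lemma cross3_ne_zero_iff {a b : E3} : cross3 a b ≠ 0 ↔ LinearIndependent ℝ ![a, b] := by
  rw [cross3_eq_crossProduct, Ne, WithLp.toLp_eq_zero, ← Ne,
    crossProduct_ne_zero_iff_linearIndependent,
    ← (WithLp.linearEquiv 2 ℝ (Fin 3 → ℝ)).toLinearMap.linearIndependent_iff (by simp)]
  congr!
  ext i; fin_cases i <;> rfl

lemma linearIndependent_b₁_b₂ : LinearIndependent ℝ ![b₁, b₂] := by
  rw [LinearIndependent.pair_iff]
  intro s t h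
  exact ⟨by simpa [b₁, b₂] using congrArg (· 0) h, by simpa [b₁, b₂] using congrArg (· 1) h⟩

lemma cross3_ne_zero_of_injective {L : E2 →L[ℝ] E3} (hL : Function.Injective L) :
    cross3 (L b₁) (L b₂) ≠ 0 := by
  rw [cross3_ne_zero_iff, show ![L b₁, L b₂] = L.toLinearMap ∘ ![b₁, b₂] by
    ext i; fin_cases i <;> rfl]
  exact linearIndependent_b₁_b₂.map' L.toLinearMap (LinearMap.ker_eq_bot.2 hL)

lemma eq_zero_of_cross3_ne_zero {a b g : E3} (hab : cross3 a b ≠ 0) (ha : a 2 = 0)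
    (hb : b 2 = 0) (hag : ⟪a, g⟫ = 0) (hbg : ⟪b, g⟫ = 0) (hg : g 2 = 0) : g = 0 := by
  have hdet : a 0 * b 1 - a 1 * b 0 ≠ 0 := fun h =>
    hab (by ext i; fin_cases i <;> simp [cross3, ha, hb, h])
  simp only [PiLp.inner_apply, Fin.sum_univ_three, RCLike.inner_apply, conj_trivial, ha, hb]
    at hag hbg
  ext i; fin_cases i
  · change g 0 = 0
    exact mul_left_cancel₀ hdet (by linear_combination b 1 * hag - a 1 * hbg)
  · change g 1 = 0
    exact mul_left_cancel₀ hdet (by linear_combination a 0 * hbg - b 0 * hag)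
  · exact hg

def projCLM : E3 →L[ℝ] E2 :=
  LinearMap.toContinuousLinearMap
    { toFun := proj
      map_add' x y := by ext i; fin_cases i <;> simp [proj]
      map_smul' c x := by ext i; fin_cases i <;> simp [proj] }

lemma b₁_eq_single : b₁ = EuclideanSpace.single 0 1 := by
  ext i; fin_cases i <;> simp [b₁]

lemma b₂_eq_single : b₂ = EuclideanSpace.single 1 1 := by
  ext i; fin_cases i <;> simp [b₂]

lemma det_projCLM_comp (L : E2 →L[ℝ] E3) : (projCLM ∘L L).det = cross3 (L b₁) (L b₂) 2 := by
  rw [ContinuousLinearMap.det,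
    ← LinearMap.det_toMatrix (EuclideanSpace.basisFun (Fin 2) ℝ).toBasis, Matrix.det_fin_two]
  simp [LinearMap.toMatrix_apply, projCLM, proj, cross3, b₁_eq_single, b₂_eq_single, mul_comm]

lemma fderiv_euclidean_apply {ι H : Type*} [Fintype ι] [NormedAddCommGroup H] [NormedSpace ℝ H]
    {F : H → EuclideanSpace ℝ ι} {p : H} (h : DifferentiableAt ℝ F p) (i : ι) (w : H) :
    fderiv ℝ (fun q => F q i) p w = fderiv ℝ F p w i :=
  congrArg (· w) ((PiLp.hasFDerivAt_apply 2 (F p) i).comp p h.hasFDerivAt).fderiv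

theorem DifferentiableAt.cross3 {H : Type*} [NormedAddCommGroup H] [NormedSpace ℝ H]
    {u v : H → E3} {p : H} (hu : DifferentiableAt ℝ u p) (hv : DifferentiableAt ℝ v p) :
    DifferentiableAt ℝ (fun q => cross3 (u q) (v q)) p := by
  rw [differentiableAt_euclidean] at hu hv ⊢
  intro i
  fin_cases i <;> exact ((hu _).mul (hv _)).sub ((hu _).mul (hv _))

lemma fderiv_mul_eq_zero_of_eq_zero {H : Type*} [NormedAddCommGroup H] [NormedSpace ℝ H]
    {ρ k : H → ℝ} {p : H} (hρ : DifferentiableAt ℝ ρ p) (hk : DifferentiableAt ℝ k p)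
    (hk₀ : k p = 0) (hdk : fderiv ℝ k p = 0) : fderiv ℝ (fun q => ρ q * k q) p = 0 := by
  rw [fderiv_fun_mul hρ hk, hk₀, hdk, smul_zero, zero_smul, add_zero]

lemma inner_fderiv_apply_self_eq_zero {H F : Type*} [NormedAddCommGroup H] [NormedSpace ℝ H]
    [NormedAddCommGroup F] [InnerProductSpace ℝ F] {G : H → F} {p : H}
    (hG : DifferentiableAt ℝ G p) {r : ℝ} (hr : ∀ᶠ q in 𝓝 p, ‖G q‖ = r) (w : H) :
    ⟪fderiv ℝ G p w, G p⟫ = 0 := by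
  have hconst : (fun q => ⟪G q, G q⟫) =ᶠ[𝓝 p] fun _ => r ^ 2 := by
    filter_upwards [hr] with q hq
    rw [real_inner_self_eq_norm_sq, hq]
  have h := fderiv_inner_apply ℝ hG hG w
  rw [hconst.fderiv_eq, fderiv_const_apply, zero_apply] at h
  linarith [real_inner_comm (G p) (fderiv ℝ G p w)]

def crossNormal (f : E2 → E3) (q : E2) : E3 := cross3 (fderiv ℝ f q b₁) (fderiv ℝ f q b₂)

lemma gaussMap_eq (f : E2 → E3) : gaussMap f = fun q => ‖crossNormal f q‖⁻¹ • crossNormal f q :=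
  rfl

lemma inner_gaussMap_e₃_eq_zero_iff (f : E2 → E3) (q : E2) :
    ⟪gaussMap f q, e₃⟫ = 0 ↔ crossNormal f q 2 = 0 := by
  have : ⟪gaussMap f q, e₃⟫ = ‖crossNormal f q‖⁻¹ * crossNormal f q 2 := by
    simp [gaussMap_eq, e₃, PiLp.inner_apply, Fin.sum_univ_three]
  rw [this, mul_eq_zero, inv_eq_zero, norm_eq_zero, or_iff_right_iff_imp]
  intro h
  simp [h]

lemma ContDiffAt.differentiableAt_crossNormal {f : E2 → E3} {q : E2} (hf : ContDiffAt ℝ 2 f q) :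
    DifferentiableAt ℝ (crossNormal f) q := by
  have hdf : DifferentiableAt ℝ (fderiv ℝ f) q :=
    (hf.fderiv_right (m := 1) le_rfl).differentiableAt one_ne_zero
  exact (hdf.clm_apply (differentiableAt_const _)).cross3 (hdf.clm_apply (differentiableAt_const _))

lemma det_fderiv_proj_comp {f : E2 → E3} {q : E2} (hf : DifferentiableAt ℝ f q) :
    (fderiv ℝ (proj ∘ f) q).det = crossNormal f q 2 := by
  rw [show proj ∘ f = projCLM ∘ f from rfl, fderiv_comp q projCLM.differentiableAt hf,
    projCLM.fderiv, det_projCLM_comp]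
  rfl

theorem cross3_fderiv_gaussMap_eq_zero {f : E2 → E3} {p : E2}
    (hc : DifferentiableAt ℝ (crossNormal f) p) (hc₀ : crossNormal f p ≠ 0)
    (hsing : crossNormal f p 2 = 0) (hdJ : fderiv ℝ (fun q => crossNormal f q 2) p = 0) :
    cross3 (fderiv ℝ (gaussMap f) p b₁) (fderiv ℝ (gaussMap f) p b₂) = 0 := by
  have hρ : DifferentiableAt ℝ (fun q => ‖crossNormal f q‖⁻¹) p :=
    (hc.norm ℝ hc₀).inv (norm_ne_zero_iff.2 hc₀)
  have hG : DifferentiableAt ℝ (gaussMap f) p := hρ.smul hc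
  have hG₂ : gaussMap f p 2 = 0 := by simp [gaussMap_eq, hsing]
  have hdG₂ (w : E2) : fderiv ℝ (gaussMap f) p w 2 = 0 := by
    rw [← fderiv_euclidean_apply hG, gaussMap_eq]
    simp only [PiLp.smul_apply, smul_eq_mul]
    rw [fderiv_mul_eq_zero_of_eq_zero hρ (differentiableAt_euclidean.1 hc 2) hsing hdJ]
    rfl
  have hunit : ∀ᶠ q in 𝓝 p, ‖gaussMap f q‖ = 1 := by
    filter_upwards [hc.continuousAt.eventually_ne hc₀] with q hq
    exact norm_smul_inv_norm hq
  by_contra hcurv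
  exact smul_ne_zero (inv_ne_zero (norm_ne_zero_iff.2 hc₀)) hc₀ <|
    eq_zero_of_cross3_ne_zero hcurv (hdG₂ _) (hdG₂ _) (inner_fderiv_apply_self_eq_zero hG hunit _)
      (inner_fderiv_apply_self_eq_zero hG hunit _) hG₂

/-- Let `U ⊆ ℝ²` be open, `f : U → ℝ³` a `C²` immersion with Gauss map `G`, `F = P ∘ f`,
and `J(q) = det(DF(q))`.  If `p ∈ U` is a singular point of `F` (i.e. `⟨G(p), e₃⟩ = 0`)
at which the Gaussian curvature does not vanish (i.e. `∂₁G(p) × ∂₂G(p) ≠ 0`), then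
`DJ(p) ≠ 0`.  Consequently, if the Gaussian curvature is nonzero at every singular point
of `F`, then `F` is a good map. -/
theorem good_point_of_nonzero_curvature
    (U : Set E2) (hU : IsOpen U) (f : E2 → E3) (hf : ContDiffOn ℝ 2 f U)
    (himm : ∀ p ∈ U, Function.Injective (fderiv ℝ f p))
    (J : E2 → ℝ) (hJ : ∀ q, J q = (fderiv ℝ (proj ∘ f) q).det)
    (p : E2) (hp : p ∈ U)
    (hsing : ⟪gaussMap f p, e₃⟫ = 0)
    (hcurv : cross3 (fderiv ℝ (gaussMap f) p b₁) (fderiv ℝ (gaussMap f) p b₂) ≠ 0) :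
    fderiv ℝ J p ≠ 0 ∧
    ((∀ q ∈ U, J q = 0 →
        cross3 (fderiv ℝ (gaussMap f) q b₁) (fderiv ℝ (gaussMap f) q b₂) ≠ 0) →
      ∀ q ∈ U, J q = 0 → fderiv ℝ J q ≠ 0) := by
  have hf₂ (q : E2) (hq : q ∈ U) : ContDiffAt ℝ 2 f q := hf.contDiffAt (hU.mem_nhds hq)
  have hJ_eq (q : E2) (hq : q ∈ U) : J =ᶠ[𝓝 q] fun x => crossNormal f x 2 := by
    filter_upwards [hU.mem_nhds hq] with x hx
    rw [hJ, det_fderiv_proj_comp ((hf₂ x hx).differentiableAt two_ne_zero)]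
  have hgood (q : E2) (hq : q ∈ U) (hsing : ⟪gaussMap f q, e₃⟫ = 0)
      (hcurv : cross3 (fderiv ℝ (gaussMap f) q b₁) (fderiv ℝ (gaussMap f) q b₂) ≠ 0) :
      fderiv ℝ J q ≠ 0 := fun hdJ =>
    hcurv <| cross3_fderiv_gaussMap_eq_zero (hf₂ q hq).differentiableAt_crossNormal
      (cross3_ne_zero_of_injective (himm q hq)) ((inner_gaussMap_e₃_eq_zero_iff f q).1 hsing)
      (by rwa [← (hJ_eq q hq).fderiv_eq])
  refine ⟨hgood p hp hsing hcurv, fun hK q hq hJq => hgood q hq ?_ (hK q hq hJq)⟩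
  rw [inner_gaussMap_e₃_eq_zero_iff, ← (hJ_eq q hq).eq_of_nhds, hJq]
end
end

section
/- Let γ : ℝ → ℝ² be a C², T-periodic curve with ‖γ'(t)‖ = 1 for all t, let η(t) = (−γ'₂(t), γ'₁(t)) be its unit normal, let y : ℝ → ℝ be C² and T-periodic, and set Γ(t) = (γ₁(t), γ₂(t), y(t)) ∈ ℝ³ and G(t) = (η₁(t), η₂(t), 0). Then the total geodesic curvature of Γ with respect to the horizontal unit normal field G vanishes: ∫₀ᵀ ⟨Γ'(t) × Γ''(t), G(t)⟩ / (1 + y'(t)²) dt = 0. (This is the statement that a closed singular curve without cusp points has zero total geodesic curvature.) -/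
/-!
Since `γ` has unit speed, `γ'` is orthogonal to `γ''`, and the integrand collapses to
`-y'' / (1 + y'²) = -(arctan ∘ y')'`. Its integral over a period vanishes because `y'` is
`T`-periodic.
-/

open scoped RealInnerProductSpace
noncomputable section

theorem PiLp.hasDerivAt_iff {𝕜 ι : Type*} {E : ι → Type*} [NontriviallyNormedField 𝕜]
    [∀ i, NormedAddCommGroup (E i)] [∀ i, NormedSpace 𝕜 (E i)] [Fintype ι] {p : ENNReal}
    [Fact (1 ≤ p)] {f : 𝕜 → PiLp p E} {f' : PiLp p E} {t : 𝕜} :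
    HasDerivAt f f' t ↔ ∀ i, HasDerivAt (fun s => f s i) (f' i) t :=
  ⟨fun h i => (PiLp.hasFDerivAt_apply p (f t) i).comp_hasDerivAt t h,
    fun h => by
      exact (PiLp.hasFDerivAt_toLp p (f t).ofLp).comp_hasDerivAt t (hasDerivAt_pi.2 h)⟩

theorem Function.Periodic.deriv {𝕜 F : Type*} [NontriviallyNormedField 𝕜] [NormedAddCommGroup F]
    [NormedSpace 𝕜 F] {f : 𝕜 → F} {c : 𝕜} (hf : Function.Periodic f c) :
    Function.Periodic (deriv f) c := fun x => by
  rw [← deriv_comp_add_const, hf.funext]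

theorem inner_deriv_eq_zero_of_norm_eq {F : Type*} [NormedAddCommGroup F] [InnerProductSpace ℝ F]
    {f : ℝ → F} {r : ℝ} (hf : ∀ s, ‖f s‖ = r) {t : ℝ} (hft : DifferentiableAt ℝ f t) :
    ⟪f t, deriv f t⟫ = 0 := by
  have hconst : HasDerivAt (‖f ·‖ ^ 2) 0 t := by
    simpa only [hf] using hasDerivAt_const t (r ^ 2)
  simpa using hft.hasDerivAt.norm_sq.unique hconst

theorem intervalIntegral.integral_deriv_div_one_add_sq {f : ℝ → ℝ} (hf : ContDiff ℝ 1 f)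
    (a b : ℝ) : ∫ t in a..b, deriv f t / (1 + f t ^ 2) = Real.arctan (f b) - Real.arctan (f a) := by
  refine integral_eq_sub_of_hasDerivAt (f := fun t => Real.arctan (f t)) (fun t _ => ?_) ?_
  · simpa [div_eq_inv_mul] using ((hf.differentiable one_ne_zero) t).hasDerivAt.arctan
  · exact ((hf.continuous_deriv le_rfl).div (by fun_prop) fun t => by positivity).intervalIntegrable
      _ _

def liftE3 (v : E2) (c : ℝ) : E3 := WithLp.toLp 2 ![v 0, v 1, c]

theorem HasDerivAt.liftE3 {α : ℝ → E2} {z : ℝ → ℝ} {α' : E2} {z' t : ℝ}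
    (hα : HasDerivAt α α' t) (hz : HasDerivAt z z' t) :
    HasDerivAt (fun s => liftE3 (α s) (z s)) (liftE3 α' z') t := by
  refine PiLp.hasDerivAt_iff.2 fun i => ?_
  fin_cases i
  · exact PiLp.hasDerivAt_iff.1 hα 0
  · exact PiLp.hasDerivAt_iff.1 hα 1
  · exact hz

theorem deriv_liftE3 {α : ℝ → E2} {z : ℝ → ℝ} (hα : Differentiable ℝ α)
    (hz : Differentiable ℝ z) :
    deriv (fun s => liftE3 (α s) (z s)) = fun t => liftE3 (deriv α t) (deriv z t) :=
  funext fun t => ((hα t).hasDerivAt.liftE3 (hz t).hasDerivAt).deriv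

theorem inner_cross3_liftE3 (v w : E2) (c c' : ℝ) :
    ⟪cross3 (liftE3 v c) (liftE3 w c'), WithLp.toLp 2 ![-v 1, v 0, 0]⟫
      = c * ⟪v, w⟫ - c' * ‖v‖ ^ 2 := by
  simp only [cross3, liftE3, PiLp.inner_apply, EuclideanSpace.norm_sq_eq, Fin.sum_univ_two,
    Fin.sum_univ_three, RCLike.inner_apply, conj_trivial, Real.norm_eq_abs, sq_abs, Fin.isValue,
    Matrix.cons_val_zero, Matrix.cons_val_one, Matrix.cons_val_two, Matrix.head_cons, Matrix.tail_cons]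
  ring

theorem total_geodesic_curvature_zero_without_cusps_general
    (T : ℝ) (γ : ℝ → E2) (hγ : ContDiff ℝ 2 γ)
    (hunit : ∀ t, ‖deriv γ t‖ = 1)
    (y : ℝ → ℝ) (hy : ContDiff ℝ 2 y) (hyper : Function.Periodic y T)
    (Γ : ℝ → E3) (hΓ : ∀ t, Γ t = ![(γ t) 0, (γ t) 1, y t])
    (G : ℝ → E3) (hG : ∀ t, G t = ![-((deriv γ t) 1), (deriv γ t) 0, 0]) :
    ∫ t in (0:ℝ)..T,
      ⟪cross3 (deriv Γ t) (deriv (deriv Γ) t), G t⟫ / (1 + (deriv y t) ^ 2) = 0 := by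
  have hγ' : ContDiff ℝ 1 (deriv γ) := hγ.deriv'
  have hy' : ContDiff ℝ 1 (deriv y) := hy.deriv'
  have hΓ_eq : Γ = fun t => liftE3 (γ t) (y t) := funext fun t => congrArg (WithLp.toLp 2) (hΓ t)
  have hΓ' : deriv Γ = fun t => liftE3 (deriv γ t) (deriv y t) := by
    rw [hΓ_eq, deriv_liftE3 (hγ.differentiable (by norm_num)) (hy.differentiable (by norm_num))]
  have hΓ'' : deriv (deriv Γ) = fun t => liftE3 (deriv (deriv γ) t) (deriv (deriv y) t) := by
    rw [hΓ', deriv_liftE3 (hγ'.differentiable one_ne_zero) (hy'.differentiable one_ne_zero)]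
  have hintegrand : ∀ t, ⟪cross3 (deriv Γ t) (deriv (deriv Γ) t), G t⟫ / (1 + deriv y t ^ 2)
      = -(deriv (deriv y) t / (1 + deriv y t ^ 2)) := fun t => by
    rw [hΓ'', hΓ', show G t = WithLp.toLp 2 ![-deriv γ t 1, deriv γ t 0, 0] from
      congrArg (WithLp.toLp 2) (hG t), inner_cross3_liftE3, hunit,
      inner_deriv_eq_zero_of_norm_eq hunit (hγ'.differentiable one_ne_zero t)]
    ring
  rw [intervalIntegral.integral_congr fun t _ => hintegrand t, intervalIntegral.integral_neg,
    intervalIntegral.integral_deriv_div_one_add_sq hy', ← zero_add T, hyper.deriv 0, sub_self,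
    neg_zero]

/-- Let `γ : ℝ → ℝ²` be a `C²`, `T`-periodic unit-speed curve with unit normal
`η = (−γ'₂, γ'₁)`, let `y : ℝ → ℝ` be `C²` and `T`-periodic, and set
`Γ(t) = (γ₁(t), γ₂(t), y(t))` and `G(t) = (η₁(t), η₂(t), 0)`.  Then the total geodesic
curvature of `Γ` with respect to the horizontal unit normal field `G` vanishes:
`∫₀ᵀ ⟨Γ' × Γ'', G⟩ / (1 + y'²) dt = 0`.  (A closed singular curve without cusp points
has zero total geodesic curvature.) -/
theorem total_geodesic_curvature_zero_without_cusps
    (T : ℝ) (γ : ℝ → E2) (hγ : ContDiff ℝ 2 γ) (hper : Function.Periodic γ T)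
    (hunit : ∀ t, ‖deriv γ t‖ = 1)
    (y : ℝ → ℝ) (hy : ContDiff ℝ 2 y) (hyper : Function.Periodic y T)
    (Γ : ℝ → E3) (hΓ : ∀ t, Γ t = ![(γ t) 0, (γ t) 1, y t])
    (G : ℝ → E3) (hG : ∀ t, G t = ![-((deriv γ t) 1), (deriv γ t) 0, 0]) :
    ∫ t in (0:ℝ)..T,
      ⟪cross3 (deriv Γ t) (deriv (deriv Γ) t), G t⟫ / (1 + (deriv y t) ^ 2) = 0 :=
  total_geodesic_curvature_zero_without_cusps_general T γ hγ hunit y hy hyper Γ hΓ G hG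
end
end

section
/- Let X be a compact topological space, A ⊆ X a closed subset, and F : X → ℝ² a continuous map such that F is an open map on the complement of A (i.e. for every open set V ⊆ X with V ⊆ X \ A, the image F(V) is open in ℝ²). Then the topological frontier of the image F(X) is contained in F(A): frontier(F(X)) ⊆ F(A). (Applied to the projection P of a compact piece Ω of a surface with singular set contained in ∂Ω, this gives ∂P(Ω) ⊆ P(∂Ω).) -/
/-! Off `F '' A`, the range of `F` is the image of the open set `F ⁻¹' (F '' A)ᶜ ⊆ Aᶜ`, hence
open; so no point of `range F \ F '' A` lies on the frontier. Compactness makes `range F` and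
`F '' A` closed, so the frontier of `range F` lies inside `range F`, hence inside `F '' A`. -/

noncomputable section

open Set

theorem isOpen_range_diff_image_of_openOn_compl {X Y : Type*} [TopologicalSpace X]
    [TopologicalSpace Y] {A : Set X} {F : X → Y} (hF : Continuous F) (hFA : IsClosed (F '' A))
    (hopen : ∀ V : Set X, IsOpen V → V ⊆ Aᶜ → IsOpen (F '' V)) :
    IsOpen (range F \ F '' A) := by
  have hsub : F ⁻¹' (F '' A)ᶜ ⊆ Aᶜ := fun x hx hxA => hx (mem_image_of_mem F hxA)
  simpa only [image_preimage_eq_range_inter, sdiff_eq] using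
    hopen _ (hFA.isOpen_compl.preimage hF) hsub

theorem range_diff_image_subset_interior_range {X Y : Type*} [TopologicalSpace X]
    [TopologicalSpace Y] {A : Set X} {F : X → Y} (hF : Continuous F) (hFA : IsClosed (F '' A))
    (hopen : ∀ V : Set X, IsOpen V → V ⊆ Aᶜ → IsOpen (F '' V)) :
    range F \ F '' A ⊆ interior (range F) :=
  (isOpen_range_diff_image_of_openOn_compl hF hFA hopen).subset_interior_iff.mpr
    sdiff_subset

/-- Let `X` be a compact topological space, `A ⊆ X` closed, and `F : X → ℝ²` a continuous
map that is open on the complement of `A`.  Then the topological frontier of the image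
`F(X)` is contained in `F(A)`.  (Applied to the projection `P` of a compact piece `Ω` of a
surface with singular set contained in `∂Ω`, this gives `∂P(Ω) ⊆ P(∂Ω)`.) -/
theorem frontier_image_subset_image_of_openOn_compl
    (X : Type*) [TopologicalSpace X] [CompactSpace X]
    (A : Set X) (hA : IsClosed A) (F : X → E2) (hF : Continuous F)
    (hopen : ∀ V : Set X, IsOpen V → V ⊆ Aᶜ → IsOpen (F '' V)) :
    frontier (Set.range F) ⊆ F '' A := by
  have hFA : IsClosed (F '' A) := (hA.isCompact.image hF).isClosed
  rw [(isCompact_range hF).isClosed.frontier_eq, sdiff_subset_comm]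
  exact range_diff_image_subset_interior_range hF hFA hopen
end
end
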